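/- For i ≥ 1 and 1 ≤ r ≤ 2i+1, define v^r ∈ 𝔹^{2i+1} by: v^r_c = ⊥ if c = r; v^r_c = tt if c ≠ r and (c − r) mod (2i+1) is odd; v^r_c = ff if c ≠ r and (c − r) mod (2i+1) is even. Define the bivalued Gustave function bG_i : 𝔹^{2i+1} → 𝔹 by bG_i(x) = ff if v^1 ≤ x, bG_i(x) = tt if v^r ≤ x for some 2 ≤ r ≤ 2i+1, and bG_i(x) = ⊥ otherwise (this is well-defined since the v^r are pairwise incompatible). Then bG_i is monotone and cc(bG_i) = bcc(bG_i) = 2i+1 (i.e. bG_i has presequentiality level (2i, 2i)). -/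

import Mathlib

/-- The flat boolean domain: `⊥`, `tt`, `ff`. -/
abbrev Bb : Type := WithBot Bool

/-- The flat (domain) order on `Bb`: `⊥` below everything, `tt` and `ff` incomparable. -/
def bLE (a b : Bb) : Prop := a = ⊥ ∨ a = b

/-- Pointwise flat order on tuples. -/
def tupLE {k : ℕ} (x y : Fin k → Bb) : Prop := ∀ i, bLE (x i) (y i)

/-- Strict pointwise flat order on tuples. -/
def tupLT {k : ℕ} (x y : Fin k → Bb) : Prop := tupLE x y ∧ x ≠ y

/-- A first-order boolean function is monotone for the flat order. -/
def FlatMono {k : ℕ} (f : (Fin k → Bb) → Bb) : Prop :=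
  ∀ x y, tupLE x y → bLE (f x) (f y)

/-- The presequentiality relation `P^n_{A,B}` (indices `0,…,n-1`). -/
def Preseq (n : ℕ) (A B : Finset ℕ) : Set (Fin n → Bb) :=
  {d | (∃ i : Fin n, (i : ℕ) ∈ A ∧ d i = ⊥) ∨
       (∀ i j : Fin n, (i : ℕ) ∈ B → (j : ℕ) ∈ B → d i = d j)}

/-- `P^n_{m,m'}`: the presequentiality relation on initial segments. -/
def PreseqSeg (n m m' : ℕ) : Set (Fin n → Bb) :=
  Preseq n (Finset.range m) (Finset.range m')

/-- `f` (arity `k`) is invariant under an `n`-ary relation `R`. -/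
def Invariant {k n : ℕ} (f : (Fin k → Bb) → Bb) (R : Set (Fin n → Bb)) : Prop :=
  ∀ x : Fin k → Fin n → Bb, (∀ m, x m ∈ R) →
    (fun i => f (fun m => x m i)) ∈ R

/-- `π₁(tr f)`: the set of minimal points where `f` is defined. -/
def traceDom {k : ℕ} (f : (Fin k → Bb) → Bb) : Set (Fin k → Bb) :=
  {v | f v ≠ ⊥ ∧ ∀ v', tupLT v' v → f v' = ⊥}

/-- Linear coherence of a set of tuples. -/
def LinCoherent {k : ℕ} (S : Set (Fin k → Bb)) : Prop :=
  ∀ j : Fin k, (∀ v ∈ S, v j ≠ ⊥) → ∀ v ∈ S, ∀ w ∈ S, v j = w j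

/-- The coefficient of coherence `cc(f) ∈ ℕ∞`. -/
noncomputable def cc {k : ℕ} (f : (Fin k → Bb) → Bb) : ℕ∞ :=
  sInf {c : ℕ∞ | ∃ S : Finset (Fin k → Bb),
    ↑S ⊆ traceDom f ∧ 2 ≤ S.card ∧ LinCoherent (↑S : Set (Fin k → Bb)) ∧ c = (S.card : ℕ∞)}

/-- The bivalued coefficient of coherence `bcc(f) ∈ ℕ∞`. -/
noncomputable def bcc {k : ℕ} (f : (Fin k → Bb) → Bb) : ℕ∞ :=
  sInf {c : ℕ∞ | ∃ S : Finset (Fin k → Bb),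
    ↑S ⊆ traceDom f ∧ 3 ≤ S.card ∧ LinCoherent (↑S : Set (Fin k → Bb)) ∧
    (∃ v ∈ S, f v = ((true : Bool) : Bb)) ∧ (∃ v ∈ S, f v = ((false : Bool) : Bb)) ∧
    c = (S.card : ℕ∞)}

/-- M-sequentiality, by induction on the arity. -/
def MSeq : ∀ {k : ℕ}, ((Fin k → Bb) → Bb) → Prop
  | 0, f => ∃ b, ∀ x, f x = b
  | (k+1), f => (∃ b, ∀ x, f x = b) ∨
      ∃ i : Fin (k+1), (∀ x, x i = ⊥ → f x = ⊥) ∧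
        ∀ c : Bool, MSeq (fun x : Fin k → Bb => f (i.insertNth (c : Bb) x))

/-- The `r`-th trace element of the (bivalued) Gustave function of arity `2i+1`. -/
def gv (i : ℕ) (r : Fin (2 * i + 1)) : Fin (2 * i + 1) → Bb := fun c =>
  if c = r then ⊥
  else if (((c : ℕ) + (2 * i + 1) - (r : ℕ)) % (2 * i + 1)) % 2 = 1
  then ((true : Bool) : Bb)
  else ((false : Bool) : Bb)

open Classical in
/-- The bivalued Gustave function `bG_i` of arity `2i+1`: `ff` above `v^0`, `tt`
above any other `v^r`, `⊥` otherwise. -/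
noncomputable def bgust (i : ℕ) : (Fin (2 * i + 1) → Bb) → Bb := fun x =>
  if tupLE (gv i 0) x then ((false : Bool) : Bb)
  else if ∃ r, r ≠ 0 ∧ tupLE (gv i r) x then ((true : Bool) : Bb)
  else ⊥

/-!
The trace of `bG_i` consists exactly of the points `v^r`, and two distinct `v^r` disagree at a
coordinate where both are defined, so they are pairwise incompatible. In a linearly coherent
subset `S` of the trace, two members disagreeing at a coordinate `j` force `v^j ∈ S`, since `v^j`
is the only trace point undefined at `j`. Consecutive points `v^p`, `v^(p+1)` disagree at every
other coordinate (the parities of `c - p` and `c - p - 1` differ), so a coherent set containing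
them is the whole trace. As `2i + 1` is odd, one of `v^r_s`, `v^s_r` is `tt` for `r ≠ s`, say
`v^r_s`; then `v^r` and `v^s` disagree at `r - 1`, which yields the consecutive pair
`v^(r-1)`, `v^r`. So every coherent subset with two elements is the whole trace, of size
`2i + 1`, and it takes both values.
-/

theorem Fin.val_sub_add_val_sub {n : ℕ} {a b : Fin n} (h : a ≠ b) :
    (a - b).val + (b - a).val = n := by
  rcases lt_or_gt_of_ne h with h | h
  · rw [Fin.coe_sub_iff_lt.mpr h, Fin.coe_sub_iff_le.mpr h.le]; omega
  · rw [Fin.coe_sub_iff_lt.mpr h, Fin.coe_sub_iff_le.mpr h.le]; omega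

theorem Fin.val_sub_eq_val_sub_add_one {m : ℕ} {p t : Fin (m + 1)} (h : t ≠ p) :
    (t - p).val = (t - (p + 1)).val + 1 := by
  have hsub : t - p = t - (p + 1) + 1 := by abel
  have hlast : t - (p + 1) ≠ Fin.last m := by
    intro h'
    rw [h', Fin.last_add_one, sub_eq_zero] at hsub
    exact h hsub
  rw [hsub, Fin.val_add_one, if_neg hlast]

theorem Fin.val_sub_one_sub_add_one {m : ℕ} {r s : Fin (m + 1)} (h : r ≠ s) :
    (r - 1 - s).val + 1 = (r - s).val := by
  have hrs : r - s ≠ 0 := sub_ne_zero.mpr h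
  rw [sub_right_comm, Fin.coe_sub_one, if_neg hrs]
  have : (r - s).val ≠ 0 := Fin.val_ne_zero_iff.mpr hrs
  omega

theorem LinCoherent.exists_eq_bot {k : ℕ} {S : Set (Fin k → Bb)} (hS : LinCoherent S)
    {v w : Fin k → Bb} (hv : v ∈ S) (hw : w ∈ S) {j : Fin k} (hvw : v j ≠ w j) :
    ∃ u ∈ S, u j = ⊥ := by
  by_contra! h
  exact hvw (hS j h v hv w hw)

section FlatOrder

theorem bLE_trans {a b c : Bb} (hab : bLE a b) (hbc : bLE b c) : bLE a c := by
  rcases hab with rfl | rfl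
  · exact Or.inl rfl
  · exact hbc

theorem bLE_antisymm {a b : Bb} (hab : bLE a b) (hba : bLE b a) : a = b := by
  rcases hab with rfl | rfl
  · rcases hba with rfl | rfl <;> rfl
  · rfl

variable {k : ℕ}

theorem tupLE_refl (x : Fin k → Bb) : tupLE x x := fun _ => Or.inr rfl

theorem tupLE_trans {x y z : Fin k → Bb} (hxy : tupLE x y) (hyz : tupLE y z) : tupLE x z :=
  fun j => bLE_trans (hxy j) (hyz j)

theorem tupLE_antisymm {x y : Fin k → Bb} (hxy : tupLE x y) (hyx : tupLE y x) : x = y :=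
  funext fun j => bLE_antisymm (hxy j) (hyx j)

end FlatOrder

section Gustave

variable {i : ℕ}

theorem gv_self (r : Fin (2 * i + 1)) : gv i r r = ⊥ := by
  simp [gv]

theorem gv_of_ne {r c : Fin (2 * i + 1)} (h : c ≠ r) :
    gv i r c = ((decide ((c - r).val % 2 = 1) : Bool) : Bb) := by
  have hval : ((c : ℕ) + (2 * i + 1) - r) % (2 * i + 1) = (c - r).val := by
    rw [Fin.val_sub, show (c : ℕ) + (2 * i + 1) - r = 2 * i + 1 - r + c by omega]
  unfold gv
  rw [if_neg h, hval]
  split_ifs with hodd <;> simp [hodd]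

theorem gv_eq_bot_iff {r c : Fin (2 * i + 1)} : gv i r c = ⊥ ↔ c = r := by
  refine ⟨fun h => ?_, fun h => h ▸ gv_self r⟩
  by_contra hc
  rw [gv_of_ne hc] at h
  exact WithBot.coe_ne_bot h

theorem gv_injective : Function.Injective (gv i) := fun r s h =>
  (gv_eq_bot_iff.mp (h ▸ gv_self r : gv i s r = ⊥)).symm ▸ rfl

theorem gv_ne_gv_of_parity_ne {r s c : Fin (2 * i + 1)} (hr : c ≠ r) (hs : c ≠ s)
    (h : (c - r).val % 2 ≠ (c - s).val % 2) : gv i r c ≠ gv i s c := by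
  rw [gv_of_ne hr, gv_of_ne hs, Ne, WithBot.coe_inj, decide_eq_decide]
  omega

theorem gv_ne_gv_succ {p t : Fin (2 * i + 1)} (hp : t ≠ p) (hp' : t ≠ p + 1) :
    gv i p t ≠ gv i (p + 1) t :=
  gv_ne_gv_of_parity_ne hp hp' (by rw [Fin.val_sub_eq_val_sub_add_one hp]; omega)

theorem exists_gv_ne_gv {r s : Fin (2 * i + 1)} (h : r ≠ s) :
    ∃ c, c ≠ r ∧ c ≠ s ∧ gv i r c ≠ gv i s c ∧ (c + 1 = r ∨ c + 1 = s) := by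
  wlog hodd : (s - r).val % 2 = 1 generalizing r s
  · have hsum := Fin.val_sub_add_val_sub h
    obtain ⟨c, hcs, hcr, hne, hsucc⟩ := this h.symm (by omega)
    exact ⟨c, hcr, hcs, hne.symm, hsucc.symm⟩
  have hi : i ≠ 0 := by
    rintro rfl
    exact h (Fin.ext (by omega))
  have hself : (r - 1 - r).val = 2 * i := by
    rw [sub_sub_cancel_left, Fin.coe_neg_one]
  have hsum := Fin.val_sub_add_val_sub h
  have hpred := Fin.val_sub_one_sub_add_one h
  have hcr : r - 1 ≠ r := fun h' => by rw [h', sub_self, Fin.val_zero] at hself; omega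
  have hcs : r - 1 ≠ s := fun h' => by
    rw [← h', sub_sub_cancel_left, Fin.coe_neg_one] at hodd
    omega
  exact ⟨r - 1, hcr, hcs, gv_ne_gv_of_parity_ne hcr hcs (by omega), Or.inl (sub_add_cancel r 1)⟩

theorem eq_of_gv_le_of_gv_le {r s : Fin (2 * i + 1)} {x : Fin (2 * i + 1) → Bb}
    (hr : tupLE (gv i r) x) (hs : tupLE (gv i s) x) : r = s := by
  by_contra h
  obtain ⟨c, hcr, hcs, hne, -⟩ := exists_gv_ne_gv h
  rcases hr c with hr | hr
  · exact hcr (gv_eq_bot_iff.mp hr)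
  rcases hs c with hs | hs
  · exact hcs (gv_eq_bot_iff.mp hs)
  exact hne (hr.trans hs.symm)

end Gustave

section BivaluedGustave

variable {i : ℕ}

theorem bgust_of_gv_le {r : Fin (2 * i + 1)} {x : Fin (2 * i + 1) → Bb} (h : tupLE (gv i r) x) :
    bgust i x = if r = 0 then ((false : Bool) : Bb) else ((true : Bool) : Bb) := by
  unfold bgust
  by_cases hr : r = 0
  · subst hr
    rw [if_pos h, if_pos rfl]
  · rw [if_neg fun h0 => hr (eq_of_gv_le_of_gv_le h h0), if_pos ⟨r, hr, h⟩, if_neg hr]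

theorem bgust_ne_bot_iff {x : Fin (2 * i + 1) → Bb} :
    bgust i x ≠ ⊥ ↔ ∃ r, tupLE (gv i r) x := by
  refine ⟨fun h => ?_, fun ⟨r, hr⟩ => ?_⟩
  · unfold bgust at h
    split_ifs at h with h0 h1
    · exact ⟨0, h0⟩
    · obtain ⟨r, -, hr⟩ := h1
      exact ⟨r, hr⟩
    · exact absurd rfl h
  · rw [bgust_of_gv_le hr]
    split_ifs <;> exact WithBot.coe_ne_bot

theorem bgust_flatMono : FlatMono (bgust i) := by
  intro x y hxy
  by_cases hx : bgust i x = ⊥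
  · exact Or.inl hx
  obtain ⟨r, hr⟩ := bgust_ne_bot_iff.mp hx
  rw [bgust_of_gv_le hr, bgust_of_gv_le (tupLE_trans hr hxy)]
  exact Or.inr rfl

theorem traceDom_bgust : traceDom (bgust i) = Set.range (gv i) := by
  ext v
  constructor
  · rintro ⟨hv, hmin⟩
    obtain ⟨r, hr⟩ := bgust_ne_bot_iff.mp hv
    refine ⟨r, by_contra fun hne => ?_⟩
    exact bgust_ne_bot_iff.mpr ⟨r, tupLE_refl _⟩ (hmin _ ⟨hr, hne⟩)
  · rintro ⟨r, rfl⟩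
    refine ⟨bgust_ne_bot_iff.mpr ⟨r, tupLE_refl _⟩, fun v ⟨hle, hne⟩ => by_contra fun hv => ?_⟩
    obtain ⟨s, hs⟩ := bgust_ne_bot_iff.mp hv
    obtain rfl := eq_of_gv_le_of_gv_le (tupLE_trans hs hle) (tupLE_refl (gv i r))
    exact hne (tupLE_antisymm hle hs)

end BivaluedGustave

section Coherence

variable {i : ℕ} {S : Finset (Fin (2 * i + 1) → Bb)}

theorem gv_mem_of_gv_ne (hS : ↑S ⊆ Set.range (gv i))
    (hcoh : LinCoherent (↑S : Set (Fin (2 * i + 1) → Bb)))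
    {r s j : Fin (2 * i + 1)} (hr : gv i r ∈ S) (hs : gv i s ∈ S) (hne : gv i r j ≠ gv i s j) :
    gv i j ∈ S := by
  obtain ⟨u, hu, hbot⟩ := hcoh.exists_eq_bot hr hs hne
  obtain ⟨t, rfl⟩ := hS hu
  rwa [gv_eq_bot_iff.mp hbot]

theorem forall_gv_mem_of_gv_succ_mem (hS : ↑S ⊆ Set.range (gv i))
    (hcoh : LinCoherent (↑S : Set (Fin (2 * i + 1) → Bb))) {p : Fin (2 * i + 1)} (hp : gv i p ∈ S)
    (hp' : gv i (p + 1) ∈ S) (t : Fin (2 * i + 1)) : gv i t ∈ S := by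
  by_cases htp : t = p
  · exact htp ▸ hp
  by_cases htp' : t = p + 1
  · exact htp' ▸ hp'
  exact gv_mem_of_gv_ne hS hcoh hp hp' (gv_ne_gv_succ htp htp')

theorem eq_image_gv_of_two_le_card (hS : ↑S ⊆ Set.range (gv i))
    (hcoh : LinCoherent (↑S : Set (Fin (2 * i + 1) → Bb))) (hcard : 2 ≤ S.card) :
    S = Finset.univ.image (gv i) := by
  obtain ⟨v, hv, w, hw, hvw⟩ := Finset.one_lt_card.mp hcard
  obtain ⟨r, rfl⟩ := hS hv
  obtain ⟨s, rfl⟩ := hS hw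
  obtain ⟨c, -, -, hne, hsucc⟩ := exists_gv_ne_gv (fun h : r = s => hvw (h ▸ rfl))
  have hc := gv_mem_of_gv_ne hS hcoh hv hw hne
  have hall : ∀ t, gv i t ∈ S := by
    rcases hsucc with rfl | rfl
    · exact forall_gv_mem_of_gv_succ_mem hS hcoh hc hv
    · exact forall_gv_mem_of_gv_succ_mem hS hcoh hc hw
  ext u
  refine ⟨fun hu => ?_, fun hu => ?_⟩
  · obtain ⟨t, rfl⟩ := hS hu
    exact Finset.mem_image_of_mem _ (Finset.mem_univ t)
  · obtain ⟨t, -, rfl⟩ := Finset.mem_image.mp hu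
    exact hall t

end Coherence

section CoefficientOfCoherence

variable {i : ℕ}

theorem card_image_gv : (Finset.univ.image (gv i)).card = 2 * i + 1 := by
  rw [Finset.card_image_of_injective _ gv_injective, Finset.card_univ, Fintype.card_fin]

theorem linCoherent_image_gv :
    LinCoherent (↑(Finset.univ.image (gv i)) : Set (Fin (2 * i + 1) → Bb)) :=
  fun j hj => absurd (gv_self j) (hj _ (by simp))

theorem image_gv_subset_traceDom : ↑(Finset.univ.image (gv i)) ⊆ traceDom (bgust i) := by
  rw [traceDom_bgust, Finset.coe_image, Finset.coe_univ, Set.image_univ]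

theorem cc_bgust (hi : 1 ≤ i) : cc (bgust i) = ((2 * i + 1 : ℕ) : ℕ∞) := by
  refine le_antisymm (sInf_le ⟨_, image_gv_subset_traceDom, by rw [card_image_gv]; omega,
    linCoherent_image_gv, by rw [card_image_gv]⟩) (le_sInf ?_)
  rintro _ ⟨S, hS, hcard, hcoh, rfl⟩
  rw [traceDom_bgust] at hS
  rw [eq_image_gv_of_two_le_card hS hcoh hcard, card_image_gv]

theorem bcc_bgust (hi : 1 ≤ i) : bcc (bgust i) = ((2 * i + 1 : ℕ) : ℕ∞) := by
  have hone : (⟨1, by omega⟩ : Fin (2 * i + 1)) ≠ 0 := fun h => by simpa using congrArg Fin.val h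
  refine le_antisymm (sInf_le ⟨_, image_gv_subset_traceDom, by rw [card_image_gv]; omega,
    linCoherent_image_gv, ⟨gv i ⟨1, by omega⟩, by simp, ?_⟩, ⟨gv i 0, by simp, ?_⟩,
    by rw [card_image_gv]⟩) (le_sInf ?_)
  · rw [bgust_of_gv_le (tupLE_refl _), if_neg hone]
  · rw [bgust_of_gv_le (tupLE_refl _), if_pos rfl]
  rintro _ ⟨S, hS, hcard, hcoh, -, -, rfl⟩
  rw [traceDom_bgust] at hS
  rw [eq_image_gv_of_two_le_card hS hcoh (by omega), card_image_gv]

end CoefficientOfCoherence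

/-- for `i ≥ 1`, `bG_i` is monotone and
`cc (bG_i) = bcc (bG_i) = 2i + 1`. -/
theorem stmt_18 (i : ℕ) (hi : 1 ≤ i) :
    FlatMono (bgust i) ∧
    cc (bgust i) = ((2 * i + 1 : ℕ) : ℕ∞) ∧
    bcc (bgust i) = ((2 * i + 1 : ℕ) : ℕ∞) :=
  ⟨bgust_flatMono, cc_bgust hi, bcc_bgust hi⟩
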